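/- arXiv:2601.16757 — 7 statements merged into one kernel-verified Lean document; each statement's English description precedes it below -/
import Mathlib

section
/- Fix positive integers s and A, and let x, n be positive integers with x dividing A^n·(n!)^s. Let β be the maximal exponent in the prime factorization of A (β = 0 if A = 1). Then for every positive integer a, x ≤ (a·ω(x)+1)^{n·ω(x)·(β+s)} · (A·n^s)^{n·(β·ω(x) + s/a)}. -/
/-- `K x` is the maximal exponent in the prime factorization of `x`. -/
def maxExponent (x : ℕ) : ℕ := x.primeFactors.sup x.factorization

/-!
Write `x = ∏ p ^ v_p(x)` over its `ω` prime factors. Every such `p` divides `A` or `n!`, so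
`p ≤ A n^s`, and Legendre's bound `(p - 1) v_p(n!) ≤ n` gives `v_p(x) ≤ nβ + sn/(p - 1)`.
A prime `p ≤ aω + 1` then contributes at most `(aω + 1)^{n(β+s)}`, while a larger one has
`v_p(x) ≤ nβ + sn/(aω)` and contributes at most `(A n^s)^{nβ + sn/(aω)}`; multiplying over the
`ω` primes gives the bound.
-/

open Nat Real Finset

theorem Nat.factorization_le_maxExponent (A p : ℕ) : A.factorization p ≤ maxExponent A := by
  by_cases hp : p ∈ A.primeFactors
  · exact Finset.le_sup hp
  · rw [← Nat.support_factorization, Finsupp.notMem_support_iff] at hp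
    simp [hp]

theorem Nat.Prime.le_mul_pow_of_dvd_pow_mul_factorial_pow {p A n s : ℕ} (hp : p.Prime)
    (hA : 0 < A) (hn : 0 < n) (hs : 0 < s) (h : p ∣ A ^ n * n ! ^ s) : p ≤ A * n ^ s := by
  rcases hp.dvd_mul.mp h with hpA | hpn
  · calc p ≤ A := Nat.le_of_dvd hA (hp.dvd_of_dvd_pow hpA)
      _ ≤ A * n ^ s := Nat.le_mul_of_pos_right _ (by positivity)
  · calc p ≤ n := hp.dvd_factorial.mp (hp.dvd_of_dvd_pow hpn)
      _ ≤ n ^ s := Nat.le_self_pow hs.ne' n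
      _ ≤ A * n ^ s := Nat.le_mul_of_pos_left _ hA

theorem Nat.factorization_le_of_dvd_pow_mul_factorial_pow {x A n s : ℕ} (hA : A ≠ 0)
    (h : x ∣ A ^ n * n ! ^ s) (p : ℕ) :
    x.factorization p ≤ n * maxExponent A + s * (n !).factorization p := by
  have hne : A ^ n * n ! ^ s ≠ 0 := by positivity
  have := (Nat.factorization_le_iff_dvd (ne_zero_of_dvd_ne_zero hne h) hne).mpr h p
  simp only [Nat.factorization_mul (pow_ne_zero n hA) (pow_ne_zero s n.factorial_ne_zero),
    Nat.factorization_pow, Finsupp.coe_add, Pi.add_apply, Finsupp.coe_smul, Pi.smul_apply,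
    smul_eq_mul] at this
  exact this.trans (by gcongr; exact A.factorization_le_maxExponent p)

theorem Nat.Prime.factorization_factorial_le_div_sub_one {p : ℕ} (hp : p.Prime) (n : ℕ) :
    ((n !).factorization p : ℝ) ≤ n / (p - 1) := by
  have hp1 : (1 : ℝ) < p := by exact_mod_cast hp.one_lt
  have h : (((p - 1 : ℕ) : ℝ)) * (n !).factorization p ≤ n := by
    exact_mod_cast (sub_one_mul_factorization_factorial hp).le.trans (Nat.sub_le _ _)
  rw [Nat.cast_sub hp.one_le, Nat.cast_one] at h
  rwa [le_div_iff₀ (by linarith), mul_comm]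

theorem Real.rpow_le_mul_rpow_of_le_add_div_sub_one {p C B D m v : ℝ} (hp : 2 ≤ p) (hpC : p ≤ C)
    (hB : 0 ≤ B) (hD : 0 ≤ D) (hm : 0 < m) (hv : v ≤ B + D / (p - 1)) :
    p ^ v ≤ (m + 1) ^ (B + D) * C ^ (B + D / m) := by
  have hp1 : 1 ≤ p := by linarith
  rcases le_or_gt p (m + 1) with hsmall | hlarge
  · have hv' : v ≤ B + D := hv.trans (by gcongr; exact div_le_self hD (by linarith))
    calc p ^ v ≤ p ^ (B + D) := rpow_le_rpow_of_exponent_le hp1 hv'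
      _ ≤ (m + 1) ^ (B + D) := rpow_le_rpow (by linarith) hsmall (by positivity)
      _ ≤ _ := le_mul_of_one_le_right (by positivity) (one_le_rpow (by linarith) (by positivity))
  · have hv' : v ≤ B + D / m := hv.trans (by gcongr; linarith)
    calc p ^ v ≤ p ^ (B + D / m) := rpow_le_rpow_of_exponent_le hp1 hv'
      _ ≤ C ^ (B + D / m) := rpow_le_rpow (by linarith) hpC (by positivity)
      _ ≤ _ := le_mul_of_one_le_left (rpow_nonneg (by linarith) _)
          (one_le_rpow (by linarith) (by positivity))

theorem Nat.cast_le_of_primeFactors_le_of_factorization_le {x a B D : ℕ} {C : ℝ} (hx : x ≠ 0) (ha : 0 < a)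
    (hC : 1 ≤ C) (hpC : ∀ p ∈ x.primeFactors, (p : ℝ) ≤ C)
    (hv : ∀ p ∈ x.primeFactors, (x.factorization p : ℝ) ≤ B + D / (p - 1)) :
    (x : ℝ) ≤ ((a * #x.primeFactors + 1 : ℕ) : ℝ) ^ (#x.primeFactors * (B + D)) *
      C ^ (#x.primeFactors * (B : ℝ) + D / a) := by
  have hprime (p) (hp : p ∈ x.primeFactors) : (p : ℝ) ^ (x.factorization p : ℝ) ≤
      ((a * #x.primeFactors + 1 : ℕ) : ℝ) ^ ((B + D : ℕ) : ℝ) *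
        C ^ (B + D / (a * #x.primeFactors : ℝ)) := by
    have hω : 0 < #x.primeFactors := Finset.card_pos.mpr ⟨p, hp⟩
    push_cast
    exact rpow_le_mul_rpow_of_le_add_div_sub_one
      (by exact_mod_cast (prime_of_mem_primeFactors hp).two_le) (hpC p hp) (by positivity)
      (by positivity) (by positivity) (hv p hp)
  have hexp : #x.primeFactors * (B + D / (a * #x.primeFactors : ℝ)) ≤
      #x.primeFactors * (B : ℝ) + D / a := by
    rcases Nat.eq_zero_or_pos #x.primeFactors with h | h
    · simp only [h, CharP.cast_eq_zero, mul_zero, div_zero, add_zero, zero_mul, zero_add]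
      positivity
    · exact le_of_eq (by field_simp)
  calc (x : ℝ) = ∏ p ∈ x.primeFactors, (p : ℝ) ^ (x.factorization p : ℝ) := by
        conv_lhs => rw [Nat.prod_primeFactors_pow_factorization hx]
        simp [Real.rpow_natCast]
    _ ≤ ∏ _p ∈ x.primeFactors, ((a * #x.primeFactors + 1 : ℕ) : ℝ) ^ ((B + D : ℕ) : ℝ) *
          C ^ (B + D / (a * #x.primeFactors : ℝ)) :=
        prod_le_prod (fun _ _ => by positivity) hprime
    _ = ((a * #x.primeFactors + 1 : ℕ) : ℝ) ^ (#x.primeFactors * (B + D)) *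
          C ^ (#x.primeFactors * (B + D / (a * #x.primeFactors : ℝ))) := by
        rw [prod_const, mul_pow, rpow_natCast, ← pow_mul, ← rpow_natCast (C ^ _),
          ← rpow_mul (by positivity), mul_comm (B + D), mul_comm _ (#x.primeFactors : ℝ)]
    _ ≤ _ := by gcongr

/-- If `x ∣ A^n·(n!)^s` and `β` is the maximal exponent in the prime factorization of `A`,
then for every positive integer `a`,
`x ≤ (a·ω(x)+1)^{n·ω(x)·(β+s)} · (A·n^s)^{n·(β·ω(x)+s/a)}`. -/
theorem le_of_dvd_pow_mul_factorial_pow'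
    (s A : ℕ) (hs : 0 < s) (hA : 0 < A) (x n : ℕ) (hx : 0 < x) (hn : 0 < n)
    (hdvd : x ∣ A ^ n * (Nat.factorial n) ^ s)
    (β : ℕ) (hβ : β = maxExponent A) (a : ℕ) (ha : 0 < a) :
    (x : ℝ) ≤
      ((a * x.primeFactors.card + 1 : ℕ) : ℝ) ^ (n * x.primeFactors.card * (β + s)) *
        ((A * n ^ s : ℕ) : ℝ) ^
          ((n : ℝ) * ((β : ℝ) * (x.primeFactors.card : ℝ) + (s : ℝ) / (a : ℝ))) := by
  subst hβ
  have hC : (1 : ℝ) ≤ ((A * n ^ s : ℕ) : ℝ) := by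
    exact_mod_cast Nat.one_le_iff_ne_zero.mpr (by positivity)
  have hbound := cast_le_of_primeFactors_le_of_factorization_le (B := n * maxExponent A) (D := s * n)
    hx.ne' ha hC (fun p hp => ?prime_le) (fun p hp => ?factorization_le)
  case prime_le =>
    exact_mod_cast (prime_of_mem_primeFactors hp).le_mul_pow_of_dvd_pow_mul_factorial_pow
      hA hn hs ((dvd_of_mem_primeFactors hp).trans hdvd)
  case factorization_le =>
    calc (x.factorization p : ℝ) ≤ n * maxExponent A + s * (n !).factorization p := by
          exact_mod_cast factorization_le_of_dvd_pow_mul_factorial_pow hA.ne' hdvd p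
      _ ≤ _ := by
          push_cast
          rw [mul_div_assoc]
          gcongr
          exact (prime_of_mem_primeFactors hp).factorization_factorial_le_div_sub_one n
  convert hbound using 3 <;> push_cast <;> ring
end

section
/- Fix a positive integer s, and let x, n be positive integers with n ≥ 2 and x dividing (n!)^s. Then for every positive integer a, x ≤ (a·ω(x)+1)^{n·ω(x)·s} · n^{s²·n/a}. -/
/-!
Legendre's formula gives `(p - 1) · v_p(n!) ≤ n`, so every prime `p ∣ x` satisfies `p ≤ n` and
`(p - 1) · v_p(x) ≤ s n`. Split the prime factors of `x` at `T = a ω(x) + 1`. A prime `p ≤ T`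
contributes at most `T ^ (s n)`, since `v_p(x) ≤ s n`. A prime `p > T` contributes at most
`n ^ v_p(x)` with `T · v_p(x) ≤ s n`, so together these contribute at most
`n ^ (ω(x) s n / T) ≤ n ^ (s n / a)`.
-/

open Finset
open scoped Nat

theorem Finset.mul_sum_le_card_mul {ι : Type*} {S : Finset ι} {f w : ι → ℕ} {c E : ℕ}
    (hc : ∀ i ∈ S, c ≤ w i) (hE : ∀ i ∈ S, w i * f i ≤ E) :
    c * ∑ i ∈ S, f i ≤ #S * E := by
  rw [mul_sum, ← smul_eq_mul]
  exact sum_le_card_nsmul _ _ _ fun i hi =>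
    (Nat.mul_le_mul_right _ (hc i hi)).trans (hE i hi)

theorem Finset.prod_pow_le_pow_sum {ι : Type*} {S : Finset ι} {g f : ι → ℕ} {B : ℕ}
    (hB : ∀ i ∈ S, g i ≤ B) : ∏ i ∈ S, g i ^ f i ≤ B ^ ∑ i ∈ S, f i := by
  rw [← prod_pow_eq_pow_sum]
  exact prod_le_prod' fun i hi => Nat.pow_le_pow_left (hB i hi) _

namespace Nat

theorem sub_one_mul_factorization_factorial_le (n p : ℕ) :
    (p - 1) * (n !).factorization p ≤ n := by
  by_cases hp : p.Prime
  · have : Fact p.Prime := ⟨hp⟩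
    rw [factorization_def _ hp, sub_one_mul_padicValNat_factorial]
    exact sub_le _ _
  · rw [factorization_eq_zero_of_not_prime _ hp, mul_zero]
    exact zero_le n

theorem sub_one_mul_factorization_le_of_dvd_factorial_pow {x n s : ℕ} (h : x ∣ n ! ^ s)
    (p : ℕ) : (p - 1) * x.factorization p ≤ s * n := by
  have hx : x ≠ 0 := ne_zero_of_dvd_ne_zero (by positivity) h
  have hv : x.factorization p ≤ s * (n !).factorization p := by
    simpa using (factorization_le_iff_dvd hx (by positivity)).2 h p
  calc (p - 1) * x.factorization p ≤ (p - 1) * (s * (n !).factorization p) :=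
        Nat.mul_le_mul_left _ hv
    _ = s * ((p - 1) * (n !).factorization p) := by ring
    _ ≤ s * n := Nat.mul_le_mul_left _ (sub_one_mul_factorization_factorial_le n p)

theorem le_of_mem_primeFactors_of_dvd_factorial_pow {x n s p : ℕ} (h : x ∣ n ! ^ s)
    (hp : p ∈ x.primeFactors) : p ≤ n :=
  (prime_of_mem_primeFactors hp).dvd_factorial.1 <|
    (prime_of_mem_primeFactors hp).dvd_of_dvd_pow <| (dvd_of_mem_primeFactors hp).trans h

section SplitAtThreshold

variable {x T N E : ℕ}

theorem prod_filter_le_pow_factorization_le (hT : 0 < T)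
    (hE : ∀ p ∈ x.primeFactors, (p - 1) * x.factorization p ≤ E) :
    ∏ p ∈ x.primeFactors with p ≤ T, p ^ x.factorization p ≤ T ^ (#x.primeFactors * E) := by
  have hsum :
      1 * ∑ p ∈ x.primeFactors with p ≤ T, x.factorization p ≤ #x.primeFactors * E :=
    (mul_sum_le_card_mul
      (fun p hp => le_sub_one_of_lt (prime_of_mem_primeFactors (mem_filter.1 hp).1).one_lt)
      (fun p hp => hE p (mem_filter.1 hp).1)).trans
      (Nat.mul_le_mul_right _ (card_filter_le _ _))
  exact (prod_pow_le_pow_sum fun p hp => (mem_filter.1 hp).2).trans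
    (Nat.pow_le_pow_right hT (by simpa only [one_mul] using hsum))

theorem cast_prod_filter_not_le_pow_factorization_le (hT : 0 < T) (hN : 1 ≤ N)
    (hpN : ∀ p ∈ x.primeFactors, p ≤ N)
    (hE : ∀ p ∈ x.primeFactors, (p - 1) * x.factorization p ≤ E) :
    ((∏ p ∈ x.primeFactors with ¬p ≤ T, p ^ x.factorization p : ℕ) : ℝ) ≤
      (N : ℝ) ^ ((#x.primeFactors * E : ℕ) / (T : ℝ)) := by
  set v := ∑ p ∈ x.primeFactors with ¬p ≤ T, x.factorization p
  have hsum : T * v ≤ #x.primeFactors * E :=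
    (mul_sum_le_card_mul (fun p hp => le_sub_one_of_lt (not_le.1 (mem_filter.1 hp).2))
      (fun p hp => hE p (mem_filter.1 hp).1)).trans
      (Nat.mul_le_mul_right _ (card_filter_le _ _))
  have hv : (v : ℝ) ≤ (#x.primeFactors * E : ℕ) / (T : ℝ) := by
    rw [le_div_iff₀ (by exact_mod_cast hT), mul_comm]
    exact_mod_cast hsum
  calc ((∏ p ∈ x.primeFactors with ¬p ≤ T, p ^ x.factorization p : ℕ) : ℝ)
      ≤ ((N ^ v : ℕ) : ℝ) := by
        exact_mod_cast prod_pow_le_pow_sum fun p hp => hpN p (mem_filter.1 hp).1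
    _ = (N : ℝ) ^ (v : ℝ) := by rw [Real.rpow_natCast, cast_pow]
    _ ≤ _ := Real.rpow_le_rpow_of_exponent_le (by exact_mod_cast hN) hv

theorem cast_le_pow_mul_rpow_of_sub_one_mul_factorization_le (hx : x ≠ 0)
    (hT : 0 < T) (hN : 1 ≤ N) (hpN : ∀ p ∈ x.primeFactors, p ≤ N)
    (hE : ∀ p ∈ x.primeFactors, (p - 1) * x.factorization p ≤ E) :
    (x : ℝ) ≤ (T : ℝ) ^ (#x.primeFactors * E) *
      (N : ℝ) ^ ((#x.primeFactors * E : ℕ) / (T : ℝ)) := by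
  have hsplit : x = (∏ p ∈ x.primeFactors with p ≤ T, p ^ x.factorization p) *
      ∏ p ∈ x.primeFactors with ¬p ≤ T, p ^ x.factorization p := by
    rw [prod_filter_mul_prod_filter_not]
    exact prod_primeFactors_pow_factorization hx
  nth_rw 1 [hsplit]
  rw [cast_mul]
  exact mul_le_mul (by exact_mod_cast prod_filter_le_pow_factorization_le hT hE)
    (cast_prod_filter_not_le_pow_factorization_le hT hN hpN hE) (by positivity)
    (by positivity)

end SplitAtThreshold

end Nat

theorem le_of_dvd_factorial_pow_general
    (s : ℕ) (x n : ℕ) (hn : 2 ≤ n)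
    (hdvd : x ∣ (Nat.factorial n) ^ s) (a : ℕ) (ha : 0 < a) :
    (x : ℝ) ≤
      ((a * x.primeFactors.card + 1 : ℕ) : ℝ) ^ (n * x.primeFactors.card * s) *
        (n : ℝ) ^ ((s : ℝ) ^ 2 * (n : ℝ) / (a : ℝ)) := by
  have hx : x ≠ 0 := ne_zero_of_dvd_ne_zero (by positivity) hdvd
  have hbound := Nat.cast_le_pow_mul_rpow_of_sub_one_mul_factorization_le
    (T := a * #x.primeFactors + 1) hx (Nat.succ_pos _) (by omega)
    (fun p hp => Nat.le_of_mem_primeFactors_of_dvd_factorial_pow hdvd hp)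
    (fun p _ => Nat.sub_one_mul_factorization_le_of_dvd_factorial_pow hdvd p)
  have hexp : ((#x.primeFactors * (s * n) : ℕ) : ℝ) / ((a * #x.primeFactors + 1 : ℕ) : ℝ) ≤
      (s : ℝ) ^ 2 * n / a := by
    have hss : (s : ℝ) ≤ (s : ℝ) ^ 2 := by exact_mod_cast Nat.le_self_pow two_ne_zero s
    rw [div_le_div_iff₀ (by positivity) (by exact_mod_cast ha)]
    push_cast
    nlinarith [mul_le_mul_of_nonneg_right hss
      (by positivity : (0 : ℝ) ≤ n * (a * #x.primeFactors + 1))]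
  exact hbound.trans (mul_le_mul (le_of_eq (by ring))
    (Real.rpow_le_rpow_of_exponent_le (by exact_mod_cast hn.trans' one_le_two) hexp)
    (by positivity) (by positivity))

/-- If `x ∣ (n!)^s` with `n ≥ 2`, then for every positive integer `a`,
`x ≤ (a·ω(x)+1)^{n·ω(x)·s} · n^{s²·n/a}`. -/
theorem le_of_dvd_factorial_pow
    (s : ℕ) (hs : 0 < s) (x n : ℕ) (hx : 0 < x) (hn : 2 ≤ n)
    (hdvd : x ∣ (Nat.factorial n) ^ s) (a : ℕ) (ha : 0 < a) :
    (x : ℝ) ≤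
      ((a * x.primeFactors.card + 1 : ℕ) : ℝ) ^ (n * x.primeFactors.card * s) *
        (n : ℝ) ^ ((s : ℝ) ^ 2 * (n : ℝ) / (a : ℝ)) :=
  le_of_dvd_factorial_pow_general s x n hn hdvd a ha
end

section
/- Fix an integer A > 4 and a real ε > 0 with 4^ε < A. Then rad(A^n · lcm(1,...,n))^{1+ε} / (A^n · lcm(1,...,n)) → 0 as n → ∞. -/
open Filter

/-- The radical of a natural number: the product of its distinct prime factors. -/
def rad (m : ℕ) : ℕ := ∏ p ∈ m.primeFactors, p

/-!
Since `rad (A ^ n * lcm(1,…,n)) ≤ rad A * n#`, `n# ≤ lcm(1,…,n)` and `n# ≤ 4 ^ n`, the quotient is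
at most `rad A ^ (1 + ε) * (n#) ^ ε / A ^ n ≤ rad A ^ (1 + ε) * (4 ^ ε / A) ^ n`, a geometric
sequence with ratio `4 ^ ε / A < 1`.
-/

open UniqueFactorizationMonoid

theorem rad_eq_radical (m : ℕ) : rad m = radical m :=
  Nat.radical_eq_prod_primeFactors.symm

theorem radical_lcmUpto (n : ℕ) : radical (Nat.lcmUpto n) = primorial n := by
  rw [Nat.radical_eq_prod_primeFactors, Nat.primeFactors_lcmUpto, primorial_eq_prod_primesLE]

theorem rad_pow_mul_lcmUpto_le (A n : ℕ) : rad (A ^ n * Nat.lcmUpto n) ≤ rad A * primorial n := by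
  rw [rad_eq_radical, rad_eq_radical, ← radical_lcmUpto]
  exact Nat.le_of_dvd (by positivity) (radical_mul_dvd.trans (mul_dvd_mul_right radical_pow_dvd _))

theorem primorial_le_lcmUpto (n : ℕ) : primorial n ≤ Nat.lcmUpto n :=
  Nat.le_of_dvd (Nat.lcmUpto_pos n) (Nat.primorial_dvd_lcmUpto n)

theorem primorial_rpow_le (n : ℕ) {ε : ℝ} (hε : 0 ≤ ε) :
    (primorial n : ℝ) ^ ε ≤ ((4 : ℝ) ^ ε) ^ n := by
  rw [Real.rpow_pow_comm (by norm_num)]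
  gcongr
  exact_mod_cast primorial_le_four_pow n

theorem rad_pow_mul_lcmUpto_rpow_div_le {A : ℕ} (hA : 0 < A) (n : ℕ) {ε : ℝ} (hε : 0 ≤ ε) :
    (rad (A ^ n * Nat.lcmUpto n) : ℝ) ^ (1 + ε) / ((A ^ n * Nat.lcmUpto n : ℕ) : ℝ) ≤
      (rad A : ℝ) ^ (1 + ε) * ((4 : ℝ) ^ ε / A) ^ n := by
  have hP : (0 : ℝ) < primorial n := by exact_mod_cast primorial_pos n
  have hnum : (rad (A ^ n * Nat.lcmUpto n) : ℝ) ≤ rad A * primorial n := by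
    exact_mod_cast rad_pow_mul_lcmUpto_le A n
  have hden : (A : ℝ) ^ n * primorial n ≤ ((A ^ n * Nat.lcmUpto n : ℕ) : ℝ) := by
    push_cast
    gcongr
    exact_mod_cast primorial_le_lcmUpto n
  calc (rad (A ^ n * Nat.lcmUpto n) : ℝ) ^ (1 + ε) / ((A ^ n * Nat.lcmUpto n : ℕ) : ℝ)
      ≤ ((rad A : ℝ) * primorial n) ^ (1 + ε) / ((A : ℝ) ^ n * primorial n) := by
        gcongr
    _ = (rad A : ℝ) ^ (1 + ε) * (primorial n : ℝ) ^ ε / (A : ℝ) ^ n := by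
        rw [Real.mul_rpow (by positivity) hP.le, Real.rpow_add hP, Real.rpow_one]
        field_simp
    _ ≤ (rad A : ℝ) ^ (1 + ε) * ((4 : ℝ) ^ ε) ^ n / (A : ℝ) ^ n := by
        gcongr
        exact primorial_rpow_le n hε
    _ = (rad A : ℝ) ^ (1 + ε) * ((4 : ℝ) ^ ε / A) ^ n := by
        rw [div_pow, mul_div_assoc]

theorem rad_pow_mul_lcm_tendsto_zero_general (A : ℕ) (ε : ℝ) (hε : 0 < ε)
    (hεA : (4 : ℝ) ^ ε < (A : ℝ)) :
    Tendsto
      (fun n : ℕ =>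
        ((rad (A ^ n * (Finset.Icc 1 n).lcm id) : ℝ) ^ (1 + ε)) /
          ((A ^ n * (Finset.Icc 1 n).lcm id : ℕ) : ℝ))
      atTop (nhds 0) := by
  have hA : (0 : ℝ) < A := (Real.rpow_pos_of_pos four_pos ε).trans hεA
  have hratio : (4 : ℝ) ^ ε / A < 1 := (div_lt_one hA).mpr hεA
  have hgeom : Tendsto (fun n : ℕ => (rad A : ℝ) ^ (1 + ε) * ((4 : ℝ) ^ ε / A) ^ n)
      atTop (nhds 0) := by
    simpa using (tendsto_pow_atTop_nhds_zero_of_lt_one (by positivity) hratio).const_mul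
      ((rad A : ℝ) ^ (1 + ε))
  exact squeeze_zero (fun n => by positivity)
    (fun n => rad_pow_mul_lcmUpto_rpow_div_le (by exact_mod_cast hA) n hε.le) hgeom

/-- For `A > 4` and `ε > 0` with `4^ε < A`,
`rad(A^n·lcm(1,…,n))^{1+ε}/(A^n·lcm(1,…,n)) → 0` as `n → ∞`. -/
theorem rad_pow_mul_lcm_tendsto_zero (A : ℕ) (hA : 4 < A) (ε : ℝ) (hε : 0 < ε)
    (hεA : (4 : ℝ) ^ ε < (A : ℝ)) :
    Tendsto
      (fun n : ℕ =>
        ((rad (A ^ n * (Finset.Icc 1 n).lcm id) : ℝ) ^ (1 + ε)) /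
          ((A ^ n * (Finset.Icc 1 n).lcm id : ℕ) : ℝ))
      atTop (nhds 0) :=
  rad_pow_mul_lcm_tendsto_zero_general A ε hε hεA
end

section
/- Let d and r be positive integers with d > r, and fix positive integers A_1,...,A_r. Then the equation x^d = ∏_{i=1}^r A_i^{n_i} · n_i! has only finitely many solutions in positive integers (x, n_1, ..., n_r). -/
/-!
Let `m = max nᵢ`. If `m ≥ 2 max Aᵢ`, Bertrand's postulate gives a prime `q` with
`m / 2 < q ≤ m`. Then `q` divides `m!`, hence `x`, so `q ^ d` divides the right-hand side.
But `q` divides no `Aᵢ`, and `q ^ 2` divides no `nᵢ!` since `nᵢ < 2q`, so `q` occurs in the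
right-hand side with multiplicity at most `r < d`. Hence every `nᵢ` is bounded, and `x` is
determined by the `nᵢ`.
-/

open Finset Nat

theorem factorization_factorial_le_one {p n : ℕ} (hp : p.Prime) (hn : n < 2 * p) :
    (n)!.factorization p ≤ 1 := by
  have := Fact.mk hp
  have hnp : n / p ≤ 1 := Nat.lt_succ_iff.mp (Nat.div_lt_of_lt_mul (by linarith))
  -- `ν_p(n!) = ν_p((p * (n / p))!) = ν_p((n / p)!) + n / p`, and `(n / p)! = 1`
  rw [Nat.factorization_def _ hp, ← padicValNat_mul_div_factorial, padicValNat_factorial_mul,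
    Nat.factorial_eq_one.2 hnp, padicValNat_one_right, zero_add]
  exact hnp

theorem factorization_pow_mul_factorial_le_one {p a n : ℕ} (hp : p.Prime) (ha : a ≠ 0)
    (hpa : ¬p ∣ a) (hn : n < 2 * p) : (a ^ n * (n)!).factorization p ≤ 1 := by
  rw [Nat.factorization_mul (pow_ne_zero _ ha) (factorial_ne_zero n), Finsupp.add_apply,
    Nat.factorization_pow, Finsupp.smul_apply, Nat.factorization_eq_zero_of_not_dvd hpa,
    smul_zero, zero_add]
  exact factorization_factorial_le_one hp hn

theorem factorization_prod_le_card {ι : Type*} [Fintype ι] {p : ℕ} {f : ι → ℕ}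
    (hf : ∀ i, f i ≠ 0) (h : ∀ i, (f i).factorization p ≤ 1) :
    (∏ i, f i).factorization p ≤ Fintype.card ι := by
  rw [Nat.factorization_prod_apply fun i _ => hf i]
  simpa using Finset.sum_le_card_nsmul univ _ 1 fun i _ => h i

theorem le_factorization_pow_of_dvd {p x d : ℕ} (hp : p.Prime) (hx : x ≠ 0) (h : p ∣ x ^ d) :
    d ≤ (x ^ d).factorization p := by
  rw [Nat.factorization_pow, Finsupp.smul_apply, smul_eq_mul]
  exact Nat.le_mul_of_pos_right d (hp.factorization_pos_of_dvd hx (hp.dvd_of_dvd_pow h))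

theorem lt_two_mul_sup_of_pow_eq_prod_pow_mul_factorial {ι : Type*} [Fintype ι] {d x : ℕ}
    {A n : ι → ℕ} (hd : Fintype.card ι < d) (hA : ∀ i, 0 < A i)
    (h : x ^ d = ∏ i, A i ^ n i * (n i)!) (i : ι) : n i < 2 * univ.sup A := by
  by_contra! hi
  obtain ⟨j, -, hj⟩ := exists_max_image univ n ⟨i, mem_univ i⟩
  have hAS : ∀ k, A k ≤ univ.sup A := fun k => le_sup (mem_univ k)
  have hnj : 2 * univ.sup A ≤ n j := hi.trans (hj i (mem_univ i))
  have hnj_two : 2 ≤ n j := by have := hAS i; have := hA i; omega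
  obtain ⟨q, hq, hq_gt, hq_le⟩ := Nat.exists_prime_lt_and_le_two_mul (n j / 2) (by omega)
  have hq_le_nj : q ≤ n j := by omega
  have hA_lt : ∀ k, A k < q := fun k => by have := hAS k; omega
  have hn_lt : ∀ k, n k < 2 * q := fun k => by have := hj k (mem_univ k); omega
  have hfactor_ne : ∀ k, A k ^ n k * (n k)! ≠ 0 := fun k =>
    mul_ne_zero (pow_ne_zero _ (hA k).ne') (factorial_ne_zero _)
  have hx : x ≠ 0 := by
    rintro rfl
    exact prod_ne_zero_iff.2 (fun k _ => hfactor_ne k) (h ▸ zero_pow (by omega))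
  have hq_dvd : q ∣ x ^ d := h ▸ (dvd_factorial hq.pos hq_le_nj).trans
    ((dvd_mul_left _ _).trans (dvd_prod_of_mem _ (mem_univ j)))
  have hval_le : (x ^ d).factorization q ≤ Fintype.card ι :=
    h ▸ factorization_prod_le_card hfactor_ne fun k =>
      factorization_pow_mul_factorial_le_one hq (hA k).ne'
        (fun hdvd => (Nat.le_of_dvd (hA k) hdvd).not_gt (hA_lt k)) (hn_lt k)
  have := le_factorization_pow_of_dvd hq hx hq_dvd
  omega

theorem finite_solutions_pow_eq_prod_factorial_general (d r : ℕ)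
    (hdr : r < d) (A : Fin r → ℕ) (hA : ∀ i, 0 < A i) :
    {p : ℕ × (Fin r → ℕ) |
      0 < p.1 ∧ (∀ i, 0 < p.2 i) ∧
        p.1 ^ d = ∏ i, A i ^ p.2 i * Nat.factorial (p.2 i)}.Finite := by
  refine Set.Finite.of_finite_image (f := Prod.snd) ?_ ?_
  · refine (Set.Finite.pi (t := fun _ => Set.Iio (2 * univ.sup A))
      fun _ => Set.finite_Iio _).subset ?_
    rintro _ ⟨⟨x, n⟩, ⟨-, -, h⟩, rfl⟩ i -
    exact lt_two_mul_sup_of_pow_eq_prod_pow_mul_factorial (by simpa using hdr) hA h i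
  · rintro ⟨x, n⟩ ⟨-, -, hxn⟩ ⟨y, m⟩ ⟨-, -, hym⟩ (rfl : n = m)
    exact congrArg (·, n) (Nat.pow_left_injective (by omega) (hxn.trans hym.symm) : x = y)

/-- For `d > r` and fixed positive integers `A₁,…,A_r`, the equation
`x^d = ∏ Aᵢ^{nᵢ}·nᵢ!` has only finitely many solutions in positive integers. -/
theorem finite_solutions_pow_eq_prod_factorial (d r : ℕ) (hd : 0 < d) (hr : 0 < r)
    (hdr : r < d) (A : Fin r → ℕ) (hA : ∀ i, 0 < A i) :
    {p : ℕ × (Fin r → ℕ) |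
      0 < p.1 ∧ (∀ i, 0 < p.2 i) ∧
        p.1 ^ d = ∏ i, A i ^ p.2 i * Nat.factorial (p.2 i)}.Finite :=
  finite_solutions_pow_eq_prod_factorial_general d r hdr A hA
end

section
/- Let d and r be positive integers with d > r, and fix positive integers A_1,...,A_r. Then the equation x^d = ∏_{i=1}^r A_i^{n_i} · (n_i)# has only finitely many solutions in positive integers (x, n_1,...,n_r), where n# denotes the primorial. -/
/-!
Choose a prime `q` larger than every `Aᵢ`. In `∏ Aᵢ^{nᵢ}·(nᵢ)#` the exponent of `q` is the number
of indices with `q ≤ nᵢ`, since each primorial is squarefree and `q` divides no `Aᵢ`; this lies in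
`[0, r]`. On the left the exponent is a multiple of `d > r`, so it is `0`, hence every `nᵢ < q`.
Then `x ≤ x^d` is bounded as well, and the solutions lie in a finite box.
-/

open Finset

lemma Nat.factorization_primorial {p : ℕ} (hp : p.Prime) (n : ℕ) :
    (primorial n).factorization p = if p ≤ n then 1 else 0 := by
  split_ifs with h
  · exact factorization_eq_one_of_squarefree (squarefree_primorial n) hp (hp.dvd_primorial_iff.2 h)
  · exact factorization_eq_zero_of_not_dvd (mt hp.dvd_primorial_iff.1 h)

lemma Nat.factorization_prod_pow_mul_primorial {ι : Type*} [Fintype ι] {q : ℕ} (hq : q.Prime)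
    {A : ι → ℕ} (hqA : ∀ i, ¬q ∣ A i) (n : ι → ℕ) :
    (∏ i, A i ^ n i * primorial (n i)).factorization q = #{i | q ≤ n i} := by
  have hA : ∀ i, A i ^ n i ≠ 0 := fun i => pow_ne_zero _ fun h => hqA i (h ▸ dvd_zero q)
  rw [factorization_prod fun i _ => mul_ne_zero (hA i) (primorial_ne_zero _),
    Finsupp.finsetSum_apply, card_filter]
  refine sum_congr rfl fun i _ => ?_
  rw [factorization_mul (hA i) (primorial_ne_zero _), Finsupp.add_apply, factorization_pow,
    Finsupp.smul_apply, factorization_eq_zero_of_not_dvd (hqA i), factorization_primorial hq]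
  simp

lemma lt_of_pow_eq_prod_pow_mul_primorial {ι : Type*} [Fintype ι] {d q x : ℕ}
    (hd : Fintype.card ι < d) (hq : q.Prime) {A n : ι → ℕ} (hqA : ∀ i, ¬q ∣ A i)
    (h : x ^ d = ∏ i, A i ^ n i * primorial (n i)) (i : ι) : n i < q := by
  have hval : d * x.factorization q = #{j | q ≤ n j} := by
    rw [← Nat.factorization_prod_pow_mul_primorial hq hqA, ← h, Nat.factorization_pow,
      Finsupp.smul_apply, smul_eq_mul]
  have hcard : #{j | q ≤ n j} < d := (card_filter_le _ _).trans_lt hd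
  have hxq : x.factorization q = 0 := by
    by_contra hxq
    have := Nat.le_mul_of_pos_right d (Nat.pos_of_ne_zero hxq)
    omega
  have hempty : #{j | q ≤ n j} = 0 := by rw [← hval, hxq, mul_zero]
  by_contra hi
  exact (card_pos.2 ⟨i, by simpa using hi⟩).ne' hempty

theorem finite_solutions_pow_eq_prod_primorial_general (d r : ℕ)
    (hdr : r < d) (A : Fin r → ℕ) (hA : ∀ i, 0 < A i) :
    {p : ℕ × (Fin r → ℕ) |
      0 < p.1 ∧ (∀ i, 0 < p.2 i) ∧
        p.1 ^ d = ∏ i, A i ^ p.2 i * primorial (p.2 i)}.Finite := by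
  obtain ⟨q, hAq, hq⟩ := Nat.exists_infinite_primes (univ.sup A + 1)
  have hqA : ∀ i, ¬q ∣ A i := fun i h =>
    (Nat.le_of_dvd (hA i) h).not_gt ((le_sup (mem_univ i)).trans_lt hAq)
  refine ((Set.finite_Iic (∏ i, A i ^ q * primorial q)).prod
    (Set.Finite.pi fun _ => Set.finite_Iio q)).subset ?_
  rintro ⟨x, n⟩ ⟨-, -, hx⟩
  have hn : ∀ i, n i < q := lt_of_pow_eq_prod_pow_mul_primorial (by simpa using hdr) hq hqA hx
  refine ⟨?_, fun i _ => hn i⟩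
  calc x ≤ x ^ d := Nat.le_self_pow (by omega) x
    _ = ∏ i, A i ^ n i * primorial (n i) := hx
    _ ≤ ∏ i, A i ^ q * primorial q := prod_le_prod' fun i _ =>
      Nat.mul_le_mul (Nat.pow_le_pow_right (hA i) (hn i).le) (primorial_mono (hn i).le)

/-- For `d > r` and fixed positive integers `A₁,…,A_r`, the equation
`x^d = ∏ Aᵢ^{nᵢ}·(nᵢ)#` has only finitely many solutions in positive integers,
where `n#` is the primorial. -/
theorem finite_solutions_pow_eq_prod_primorial (d r : ℕ) (hd : 0 < d) (hr : 0 < r)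
    (hdr : r < d) (A : Fin r → ℕ) (hA : ∀ i, 0 < A i) :
    {p : ℕ × (Fin r → ℕ) |
      0 < p.1 ∧ (∀ i, 0 < p.2 i) ∧
        p.1 ^ d = ∏ i, A i ^ p.2 i * primorial (p.2 i)}.Finite :=
  finite_solutions_pow_eq_prod_primorial_general d r hdr A hA
end

section
/- Let d and r be positive integers with d > r, and fix positive integers A_1,...,A_r. Then the equation x^d = ∏_{i=1}^r A_i^{n_i} · lcm(1,...,n_i) has only finitely many solutions in positive integers (x, n_1,...,n_r). -/
/-!
If some `nᵢ` is large, Bertrand's postulate gives a prime `q` with `q ≤ max nᵢ < 2q` and `q`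
larger than every `Aᵢ`. Since `ν_q(lcm(1,…,n)) = ⌊log_q n⌋`, the `q`-adic valuation of the right
hand side is the number of `nᵢ ≥ q`, which lies in `[1, r]`; as `r < d` it is not a multiple of
`d`, so the right hand side is not a `d`-th power. Hence every `nᵢ` is bounded, and then so is `x`.
-/

open Finset
open Nat (lcmUpto lcmUpto_pos lcmUpto_ne_zero)

theorem Nat.lcmUpto_mono : Monotone lcmUpto := fun _ _ h =>
  Nat.le_of_dvd (lcmUpto_pos _) (Finset.lcm_mono (Icc_subset_Icc_right h))

theorem Nat.exists_prime_le_lt_two_mul {m : ℕ} (hm : 2 ≤ m) :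
    ∃ q, q.Prime ∧ q ≤ m ∧ m < 2 * q := by
  obtain ⟨q, hq, hlt, hle⟩ := exists_prime_lt_and_le_two_mul (m / 2) (by omega)
  exact ⟨q, hq, by omega, by omega⟩

theorem Nat.log_eq_one_of_le_of_lt_two_mul {q m : ℕ} (hq : 2 ≤ q) (hqm : q ≤ m)
    (hmq : m < 2 * q) : q.log m = 1 :=
  log_eq_one_iff'.mpr ⟨hqm, by nlinarith⟩

theorem factorization_prod_pow_mul_lcmUpto {ι : Type*} (s : Finset ι) {A : ι → ℕ} (n : ι → ℕ)
    {q : ℕ} (hq : q.Prime) (hA : ∀ i ∈ s, A i ≠ 0) (hAq : ∀ i ∈ s, A i < q) :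
    (∏ i ∈ s, A i ^ n i * lcmUpto (n i)).factorization q = ∑ i ∈ s, q.log (n i) := by
  rw [Nat.factorization_prod fun i hi =>
      mul_ne_zero (pow_ne_zero _ (hA i hi)) (lcmUpto_ne_zero _),
    Finsupp.finsetSum_apply]
  refine sum_congr rfl fun i hi => ?_
  rw [Nat.factorization_mul (pow_ne_zero _ (hA i hi)) (lcmUpto_ne_zero _), Finsupp.add_apply,
    Nat.factorization_pow, Finsupp.smul_apply, Nat.factorization_eq_zero_of_lt (hAq i hi),
    Nat.factorization_lcmUpto _ hq, smul_zero, zero_add]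

theorem lt_of_pow_eq_prod_pow_mul_lcmUpto {ι : Type*} [Fintype ι] {d x : ℕ}
    (hd : Fintype.card ι < d) {A : ι → ℕ} (hA : ∀ i, A i ≠ 0) {n : ι → ℕ}
    (h : x ^ d = ∏ i, A i ^ n i * lcmUpto (n i)) (i : ι) : n i < 2 * univ.sup A + 2 := by
  by_contra! hi
  obtain ⟨j, -, hj⟩ := exists_mem_eq_sup univ ⟨i, mem_univ i⟩ n
  have hm : 2 * univ.sup A + 2 ≤ n j := hj ▸ hi.trans (le_sup (mem_univ i))
  obtain ⟨q, hq, hqm, hmq⟩ := Nat.exists_prime_le_lt_two_mul (by omega : 2 ≤ n j)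
  have hAq : ∀ k ∈ univ, A k < q := fun k hk => by have := le_sup (f := A) hk; omega
  have hlog_j : q.log (n j) = 1 := Nat.log_eq_one_of_le_of_lt_two_mul hq.two_le hqm hmq
  have hlog_le : ∀ k ∈ univ, q.log (n k) ≤ 1 := fun k hk =>
    hlog_j ▸ Nat.log_mono_right (hj ▸ le_sup hk)
  have hsum_pos : 0 < ∑ k, q.log (n k) := by
    have := single_le_sum (f := fun k => q.log (n k)) (fun k _ => Nat.zero_le _) (mem_univ j)
    omega
  have hsum_lt : ∑ k, q.log (n k) < d :=
    (sum_le_card_nsmul _ _ 1 hlog_le).trans_lt (by simpa using hd)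
  -- the `q`-adic valuation of a `d`-th power is divisible by `d`
  have hdvd : d ∣ ∑ k, q.log (n k) := by
    rw [← factorization_prod_pow_mul_lcmUpto univ n hq (fun k _ => hA k) hAq, ← h,
      Nat.factorization_pow, Finsupp.smul_apply, smul_eq_mul]
    exact dvd_mul_right d _
  exact hsum_pos.ne' (Nat.eq_zero_of_dvd_of_lt hdvd hsum_lt)

theorem le_prod_pow_mul_lcmUpto_of_pow_eq {ι : Type*} [Fintype ι] {d x B : ℕ} (hd : d ≠ 0)
    {A n : ι → ℕ} (hA : ∀ i, 0 < A i) (hn : ∀ i, n i ≤ B)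
    (h : x ^ d = ∏ i, A i ^ n i * lcmUpto (n i)) : x ≤ ∏ i, A i ^ B * lcmUpto B :=
  calc x ≤ x ^ d := Nat.le_self_pow hd x
    _ = ∏ i, A i ^ n i * lcmUpto (n i) := h
    _ ≤ ∏ i, A i ^ B * lcmUpto B := prod_le_prod' fun i _ =>
      Nat.mul_le_mul (Nat.pow_le_pow_right (hA i) (hn i)) (Nat.lcmUpto_mono (hn i))

theorem finite_solutions_pow_eq_prod_lcm_general (d r : ℕ)
    (hdr : r < d) (A : Fin r → ℕ) (hA : ∀ i, 0 < A i) :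
    {p : ℕ × (Fin r → ℕ) |
      0 < p.1 ∧ (∀ i, 0 < p.2 i) ∧
        p.1 ^ d = ∏ i, A i ^ p.2 i * (Finset.Icc 1 (p.2 i)).lcm id}.Finite := by
  set B := 2 * univ.sup A + 2
  refine ((Set.finite_Iic (∏ i, A i ^ B * lcmUpto B)).prod
    (Set.finite_Iic fun _ : Fin r => B)).subset ?_
  rintro ⟨x, n⟩ ⟨-, -, h⟩
  have hn : ∀ i, n i ≤ B := fun i =>
    (lt_of_pow_eq_prod_pow_mul_lcmUpto (by simpa using hdr) (fun i => (hA i).ne') h i).le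
  exact ⟨le_prod_pow_mul_lcmUpto_of_pow_eq (by omega) hA hn h, hn⟩

/-- For `d > r` and fixed positive integers `A₁,…,A_r`, the equation
`x^d = ∏ Aᵢ^{nᵢ}·lcm(1,…,nᵢ)` has only finitely many solutions in positive integers. -/
theorem finite_solutions_pow_eq_prod_lcm (d r : ℕ) (hd : 0 < d) (hr : 0 < r)
    (hdr : r < d) (A : Fin r → ℕ) (hA : ∀ i, 0 < A i) :
    {p : ℕ × (Fin r → ℕ) |
      0 < p.1 ∧ (∀ i, 0 < p.2 i) ∧
        p.1 ^ d = ∏ i, A i ^ p.2 i * (Finset.Icc 1 (p.2 i)).lcm id}.Finite :=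
  finite_solutions_pow_eq_prod_lcm_general d r hdr A hA
end

section
/- Let u ≥ 1 and r ≥ 1 be integers and fix positive integers A_1,...,A_r. Assume the weak Szpiro conjecture: there exists s > 0 such that for all pairwise coprime nonzero integers A, B, C with A + B = C, |ABC| < rad(ABC)^s. Then the equation ∏_{i=1}^r A_i^{n_i} · n_i! = x² − u² has only finitely many solutions in positive integers (x, n_1,...,n_r). -/
/-!
Let `N = ∏ Aᵢ^{nᵢ} nᵢ!` and `n = max nᵢ`. Once `n ≥ 2u` we have `u² ∣ n! ∣ N = x² − u²`, hence
`u ∣ x`, say `x = u y`, and `N = u² (y² − 1)`. Splitting `y² − 1` as `(2k − 1) · 2 · (2k + 1)` for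
`y = 2k`, or as `4 · k (k + 1)` for `y = 2k + 1`, weak Szpiro bounds `y² − 1` by a power of its
radical. Since `rad N ≤ (∏ Aᵢ) · 4^{∑ nᵢ}`, this gives `n! ≤ N < D · Qⁿ` for constants `D, Q`,
which fails for large `n`. So the exponents are bounded, and they determine `x`.
-/

def radInt (m : ℤ) : ℕ := ∏ p ∈ m.natAbs.primeFactors, p

open UniqueFactorizationMonoid Finset
open scoped Nat

def WeakSzpiro (s : ℝ) : Prop :=
  ∀ a b c : ℤ, a ≠ 0 → b ≠ 0 → c ≠ 0 →
    IsCoprime a b → IsCoprime b c → IsCoprime a c → a + b = c →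
      (|a * b * c| : ℝ) < (radInt (a * b * c) : ℝ) ^ s

lemma radInt_natCast (n : ℕ) : radInt n = radical n := by
  simp [radInt, Nat.radical_eq_prod_primeFactors]

namespace Nat

lemma radical_le_radical {a b : ℕ} (h : a ∣ b) (hb : b ≠ 0) : radical a ≤ radical b :=
  Nat.le_of_dvd (radical_pos b) (radical_dvd_radical h hb)

lemma radical_two_mul_le (m : ℕ) : radical (2 * m) ≤ 2 * radical m := by
  have h2 : radical 2 = 2 := by simp [radical_of_prime Nat.prime_two.prime]
  simpa [h2] using Nat.le_of_dvd (by positivity) (radical_mul_dvd (a := 2) (b := m))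

lemma radical_factorial_le_four_pow (n : ℕ) : radical n ! ≤ 4 ^ n := by
  refine (Nat.le_of_dvd (primorial_pos n) ?_).trans (primorial_le_four_pow n)
  refine (radical_dvd_iff (primorial_ne_zero n)).2 fun p hp => ?_
  have hpp := Nat.prime_of_mem_primeFactors hp
  refine Nat.mem_primeFactors.2 ⟨hpp, ?_, primorial_ne_zero n⟩
  exact hpp.dvd_primorial_iff.2 (hpp.dvd_factorial.1 (Nat.dvd_of_mem_primeFactors hp))

lemma radical_pow_mul_factorial_le {a : ℕ} (ha : 0 < a) (n : ℕ) :
    radical (a ^ n * n !) ≤ a * 4 ^ n :=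
  calc radical (a ^ n * n !) ≤ radical (a ^ n) * radical n ! :=
        Nat.le_of_dvd (by positivity) radical_mul_dvd
    _ ≤ a * 4 ^ n := by
        gcongr
        · exact (Nat.le_of_dvd (radical_pos a) radical_pow_dvd).trans
            (radical_le_self_iff.2 ha.ne')
        · exact radical_factorial_le_four_pow n

lemma radical_prod_pow_mul_factorial_le {ι : Type*} [Fintype ι] {A : ι → ℕ} (hA : ∀ i, 0 < A i)
    (n : ι → ℕ) : radical (∏ i, A i ^ n i * (n i)!) ≤ (∏ i, A i) * 4 ^ ∑ i, n i :=
  calc radical (∏ i, A i ^ n i * (n i)!) ≤ ∏ i, radical (A i ^ n i * (n i)!) :=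
        Nat.le_of_dvd (by positivity) radical_prod_dvd
    _ ≤ ∏ i, A i * 4 ^ n i := prod_le_prod' fun i _ => radical_pow_mul_factorial_le (hA i) (n i)
    _ = (∏ i, A i) * 4 ^ ∑ i, n i := by rw [prod_mul_distrib, prod_pow_eq_pow_sum]

lemma sq_dvd_factorial {u n : ℕ} (hu : 0 < u) (h : 2 * u ≤ n) : u ^ 2 ∣ n ! :=
  calc u ^ 2 ∣ u ! * u ! := by
        rw [sq]; exact mul_dvd_mul (dvd_factorial hu le_rfl) (dvd_factorial hu le_rfl)
    _ ∣ (u + u)! := factorial_mul_factorial_dvd_factorial_add u u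
    _ ∣ n ! := factorial_dvd_factorial (by omega)

end Nat

namespace WeakSzpiro

variable {s : ℝ}

lemma lt_of_coprime (h : WeakSzpiro s) {a b : ℕ} (ha : 0 < a) (hb : 0 < b) (hab : a.Coprime b) :
    ((a * b * (a + b) : ℕ) : ℝ) < ((radical (a * b * (a + b)) : ℕ) : ℝ) ^ s := by
  have hab' : IsCoprime (a : ℤ) b := Nat.isCoprime_iff_coprime.2 hab
  have key := h a b (a + b) (by positivity) (by positivity) (by positivity) hab'
    (by simpa using hab'.symm.add_mul_left_right 1)
    (by simpa [add_comm] using hab'.add_mul_left_right 1) rfl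
  rw [← radInt_natCast]
  exact_mod_cast key

lemma lt_of_add_one_eq_sq (h : WeakSzpiro s) (hs : 0 ≤ s) {m y : ℕ} (hy : 2 ≤ y)
    (hm : m + 1 = y ^ 2) : (m : ℝ) < 4 * (2 * (radical m : ℕ) : ℝ) ^ s := by
  obtain ⟨k, rfl | rfl⟩ := Nat.even_or_odd' y
  · obtain ⟨j, rfl⟩ : ∃ j, k = j + 1 := Nat.exists_eq_add_of_le' (by omega)
    have key := h.lt_of_coprime (a := 2 * j + 1) (b := 2) (by omega) (by omega)
      ((Nat.coprime_mul_left_add_left 1 2 j).2 rfl)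
    rw [show (2 * j + 1) * 2 * (2 * j + 1 + 2) = 2 * m by nlinarith] at key
    calc (m : ℝ) ≤ (2 * m : ℕ) := by push_cast; linarith [m.cast_nonneg (α := ℝ)]
      _ < ((radical (2 * m) : ℕ) : ℝ) ^ s := key
      _ ≤ (2 * (radical m : ℕ) : ℝ) ^ s := by gcongr; exact_mod_cast Nat.radical_two_mul_le m
      _ ≤ 4 * (2 * (radical m : ℕ) : ℝ) ^ s := le_mul_of_one_le_left (by positivity) (by norm_num)
  · obtain ⟨j, rfl⟩ : ∃ j, k = j + 1 := Nat.exists_eq_add_of_le' (by nlinarith)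
    have key := h.lt_of_coprime (a := j + 1) (b := 1) (by omega) (by omega)
      (Nat.coprime_one_right _)
    have hm' : m = 4 * ((j + 1) * 1 * (j + 1 + 1)) := by nlinarith
    have hrad : radical ((j + 1) * 1 * (j + 1 + 1)) ≤ 2 * radical m :=
      (Nat.radical_le_radical (b := m) ⟨4, by rw [hm']; ring⟩ (by rw [hm']; positivity)).trans
        (by omega)
    calc (m : ℝ) = 4 * ((j + 1) * 1 * (j + 1 + 1) : ℕ) := by rw [hm']; push_cast; ring
      _ < 4 * ((radical ((j + 1) * 1 * (j + 1 + 1)) : ℕ) : ℝ) ^ s := by gcongr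
      _ ≤ 4 * (2 * (radical m : ℕ) : ℝ) ^ s := by gcongr; exact_mod_cast hrad

lemma lt_of_sq_eq_add_sq (h : WeakSzpiro s) (hs : 0 ≤ s) {N u x : ℕ} (hu : 0 < u) (hN : 0 < N)
    (hdvd : u ^ 2 ∣ N) (hx : x ^ 2 = N + u ^ 2) :
    (N : ℝ) < 4 * u ^ 2 * (2 * (radical N : ℕ) : ℝ) ^ s := by
  obtain ⟨m, rfl⟩ := hdvd
  obtain ⟨y, rfl⟩ : u ∣ x := (Nat.pow_dvd_pow_iff two_ne_zero).1 ⟨m + 1, by rw [hx]; ring⟩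
  have hm : m + 1 = y ^ 2 :=
    Nat.eq_of_mul_eq_mul_left (by positivity : 0 < u ^ 2) (by rw [mul_pow] at hx; linarith)
  have hy : 2 ≤ y := by
    by_contra! hy
    have : 0 < m := Nat.pos_of_mul_pos_left hN
    have : y ^ 2 ≤ 1 := by interval_cases y <;> simp
    omega
  have hrad : ((radical m : ℕ) : ℝ) ≤ (radical (u ^ 2 * m) : ℕ) := by
    exact_mod_cast Nat.radical_le_radical (dvd_mul_left m _) hN.ne'
  calc ((u ^ 2 * m : ℕ) : ℝ) = u ^ 2 * m := by push_cast; ring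
    _ < u ^ 2 * (4 * (2 * (radical m : ℕ) : ℝ) ^ s) := by
        gcongr; exact h.lt_of_add_one_eq_sq hs hy hm
    _ ≤ 4 * u ^ 2 * (2 * (radical (u ^ 2 * m) : ℕ) : ℝ) ^ s := by
        rw [← mul_assoc, mul_comm ((u : ℝ) ^ 2) 4]; gcongr

lemma factorial_sup_lt (h : WeakSzpiro s) (hs : 0 ≤ s) {ι : Type*} [Fintype ι] {A n : ι → ℕ}
    (hA : ∀ i, 0 < A i) {u x : ℕ} (hu : 0 < u) (hun : 2 * u ≤ univ.sup n)
    (hx : x ^ 2 = (∏ i, A i ^ n i * (n i)!) + u ^ 2) :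
    ((univ.sup n)! : ℝ) <
      4 * u ^ 2 * (2 * (∏ i, A i : ℕ) : ℝ) ^ s * (((4 : ℝ) ^ s) ^ Fintype.card ι) ^ univ.sup n := by
  set N := ∏ i, A i ^ n i * (n i)!
  set C := ∏ i, A i
  set k := univ.sup n
  have hN : 0 < N := prod_pos fun i _ => by have := hA i; positivity
  obtain ⟨j, -, hj⟩ := exists_mem_eq_sup univ
    (nonempty_iff_ne_empty.2 fun he => by simp [k, he] at hun; omega) n
  have hfac : k ! ∣ N := by
    rw [show k = n j from hj]; exact (dvd_mul_left _ _).trans (dvd_prod_of_mem _ (mem_univ j))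
  have hsum : ∑ i, n i ≤ Fintype.card ι * k := by
    simpa using sum_le_card_nsmul univ n k fun i _ => le_sup (mem_univ i)
  have hrad : radical N ≤ C * 4 ^ (Fintype.card ι * k) :=
    (Nat.radical_prod_pow_mul_factorial_le hA n).trans (by gcongr; norm_num)
  calc ((k ! : ℕ) : ℝ) ≤ N := by exact_mod_cast Nat.le_of_dvd hN hfac
    _ < 4 * u ^ 2 * (2 * (radical N : ℕ) : ℝ) ^ s :=
        h.lt_of_sq_eq_add_sq hs hu hN ((Nat.sq_dvd_factorial hu hun).trans hfac) hx
    _ ≤ 4 * u ^ 2 * (2 * ((C : ℝ) * 4 ^ (Fintype.card ι * k))) ^ s := by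
        gcongr; exact_mod_cast hrad
    _ = 4 * u ^ 2 * (2 * C : ℝ) ^ s * (((4 : ℝ) ^ s) ^ Fintype.card ι) ^ k := by
        rw [← mul_assoc, Real.mul_rpow (by positivity) (by positivity),
          ← Real.rpow_pow_comm (by norm_num), ← pow_mul]
        ring

end WeakSzpiro

theorem finite_solutions_prod_factorial_eq_sq_sub_sq_general
    (u r : ℕ) (hu : 1 ≤ u) (A : Fin r → ℕ) (hA : ∀ i, 0 < A i)
    (szpiro : ∃ s : ℝ, 0 < s ∧
      ∀ a b c : ℤ, a ≠ 0 → b ≠ 0 → c ≠ 0 →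
        IsCoprime a b → IsCoprime b c → IsCoprime a c → a + b = c →
          (|a * b * c| : ℝ) < (radInt (a * b * c) : ℝ) ^ s) :
    {p : ℕ × (Fin r → ℕ) |
      0 < p.1 ∧ (∀ i, 0 < p.2 i) ∧
        ((∏ i, A i ^ p.2 i * Nat.factorial (p.2 i) : ℕ) : ℤ) =
          (p.1 : ℤ) ^ 2 - (u : ℤ) ^ 2}.Finite := by
  obtain ⟨s, hs, hsz⟩ := szpiro
  obtain ⟨M, hM⟩ := Filter.eventually_atTop.1 <|
    FloorSemiring.eventually_mul_pow_lt_factorial_sub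
      (4 * u ^ 2 * (2 * (∏ i, A i : ℕ) : ℝ) ^ s) (((4 : ℝ) ^ s) ^ r) 0
  have hsq {x : ℕ} {n : Fin r → ℕ}
      (hx : ((∏ i, A i ^ n i * (n i)! : ℕ) : ℤ) = (x : ℤ) ^ 2 - (u : ℤ) ^ 2) :
      x ^ 2 = (∏ i, A i ^ n i * (n i)!) + u ^ 2 :=
    Int.ofNat_inj.1 (by push_cast at hx ⊢; linarith)
  have hbound {x : ℕ} {n : Fin r → ℕ}
      (hx : ((∏ i, A i ^ n i * (n i)! : ℕ) : ℤ) = (x : ℤ) ^ 2 - (u : ℤ) ^ 2) (i : Fin r) :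
      n i ≤ max M (2 * u) := by
    by_contra! hi
    have hsup : max M (2 * u) ≤ univ.sup n := hi.le.trans (le_sup (mem_univ i))
    have hlt := WeakSzpiro.factorial_sup_lt hsz hs.le hA hu (le_of_max_le_right hsup) (hsq hx)
    have hgt := hM _ (le_of_max_le_left hsup)
    simp only [Fintype.card_fin, Nat.sub_zero] at hlt hgt
    linarith
  refine Set.Finite.of_finite_image (f := Prod.snd) ?_ ?_
  · refine (Set.Finite.pi fun _ => Set.finite_Iic (max M (2 * u))).subset ?_
    rintro _ ⟨⟨x, n⟩, ⟨-, -, hx⟩, rfl⟩ i -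
    exact hbound hx i
  · rintro ⟨x, n⟩ ⟨-, -, hx⟩ ⟨y, m⟩ ⟨-, -, hy⟩ (rfl : n = m)
    have hxy : x ^ 2 = y ^ 2 := (hsq hx).trans (hsq hy).symm
    rw [Nat.pow_left_injective two_ne_zero hxy]

/-- Assuming the weak Szpiro conjecture, the equation `∏ Aᵢ^{nᵢ}·nᵢ! = x² − u²`
has only finitely many solutions in positive integers `(x, n₁, …, n_r)`. -/
theorem finite_solutions_prod_factorial_eq_sq_sub_sq
    (u r : ℕ) (hu : 1 ≤ u) (hr : 1 ≤ r) (A : Fin r → ℕ) (hA : ∀ i, 0 < A i)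
    (szpiro : ∃ s : ℝ, 0 < s ∧
      ∀ a b c : ℤ, a ≠ 0 → b ≠ 0 → c ≠ 0 →
        IsCoprime a b → IsCoprime b c → IsCoprime a c → a + b = c →
          (|a * b * c| : ℝ) < (radInt (a * b * c) : ℝ) ^ s) :
    {p : ℕ × (Fin r → ℕ) |
      0 < p.1 ∧ (∀ i, 0 < p.2 i) ∧
        ((∏ i, A i ^ p.2 i * Nat.factorial (p.2 i) : ℕ) : ℤ) =
          (p.1 : ℤ) ^ 2 - (u : ℤ) ^ 2}.Finite :=
  finite_solutions_prod_factorial_eq_sq_sub_sq_general u r hu A hA szpiro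
end
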